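/- Let a₁, b₁ > 0 with a₁ < 1. Suppose a sequence (v_t) is defined by v_0 = a₁ and v_t = a₁ + b₁ ∑_{s=0}^{t-1} v_s(1-v_s), and suppose v_t ≤ 1/2 for all t ≤ T. Then for every 0 ≤ t ≤ T, v_t ≥ (a₁/(1-a₁))·e^{(b₁/(1+b₁))·t} / (1 + (a₁/(1-a₁))·e^{(b₁/(1+b₁))·t}). -/

import Mathlib

open Finset

/-!
Write `g x = x + b₁ x (1 - x)`, so that `v (t + 1) = g (v t)`. The comparison sequence
`u t = w t / (1 + w t)` with odds `w t = a₁ / (1 - a₁) · e^{r t}`, `r = b₁ / (1 + b₁)`, starts at `a₁`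
and is a subsolution, `u (t + 1) ≤ g (u t)`: its odds grow by the factor `e^r ≤ 1 + b₁`, while
multiplying the odds of `x` by `1 + b₁` gives `(1 + b₁) x / (1 + b₁ x) ≤ g x`. Since `g` is
increasing on `(-∞, 1/2]`, where `v` stays up to time `T`, induction gives `u t ≤ v t`.
-/

/-- The forward Euler step of the logistic equation `x' = b x (1 - x)`. -/
def logisticStep (b x : ℝ) : ℝ := x + b * (x * (1 - x))

theorem monotoneOn_logisticStep {b : ℝ} (hb : 0 ≤ b) :
    MonotoneOn (logisticStep b) (Set.Iic (1 / 2)) := by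
  intro x hx y hy hxy
  simp only [Set.mem_Iic] at hx hy
  have hdiff : logisticStep b y - logisticStep b x = (y - x) * (1 + b * (1 - x - y)) := by
    unfold logisticStep; ring
  have hfactor : 0 ≤ 1 + b * (1 - x - y) := by nlinarith
  linarith [mul_nonneg (sub_nonneg.2 hxy) hfactor]

theorem div_one_add_mul_le_logisticStep {b w k : ℝ} (hb : 0 ≤ b) (hw : 0 ≤ w) (hk : 0 ≤ k)
    (hkb : k ≤ 1 + b) : w * k / (1 + w * k) ≤ logisticStep b (w / (1 + w)) := by
  have hw1 : 0 < 1 + w := by linarith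
  have hwk : 0 < 1 + w * k := by positivity
  have hstep : logisticStep b (w / (1 + w)) = w * (1 + w + b) / (1 + w) ^ 2 := by
    unfold logisticStep; field_simp; ring
  rw [hstep, div_le_div_iff₀ hwk (by positivity)]
  nlinarith [mul_nonneg hw (sub_nonneg.2 hkb), mul_nonneg (mul_nonneg hw hw) (sub_nonneg.2 hkb),
    mul_nonneg (mul_nonneg hw hw) (mul_nonneg hb hk)]

theorem Real.exp_div_one_add_le {b : ℝ} (hb : 0 ≤ b) : Real.exp (b / (1 + b)) ≤ 1 + b := by
  have hb1 : 0 < 1 + b := by linarith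
  have hlt : b / (1 + b) < 1 := (div_lt_one hb1).2 (by linarith)
  calc Real.exp (b / (1 + b)) ≤ 1 / (1 - b / (1 + b)) :=
        Real.exp_bound_div_one_sub_of_interval (by positivity) hlt
    _ = 1 + b := by field_simp; ring

theorem le_of_monotoneOn_Iic_of_le_step {α : Type*} [Preorder α] {g : α → α} {m : α}
    (hg : MonotoneOn g (Set.Iic m)) {u v : ℕ → α} {T : ℕ} (h₀ : u 0 ≤ v 0)
    (hu : ∀ t, u (t + 1) ≤ g (u t)) (hv : ∀ t, v (t + 1) = g (v t)) (hvm : ∀ t ≤ T, v t ≤ m) :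
    ∀ t ≤ T, u t ≤ v t := by
  intro t ht
  induction t with
  | zero => exact h₀
  | succ t ih =>
    have huv := ih (by omega)
    have hvt := hvm t (by omega)
    calc u (t + 1) ≤ g (u t) := hu t
      _ ≤ g (v t) := hg (le_trans huv hvt) hvt huv
      _ = v (t + 1) := (hv t).symm

theorem logisticStep_of_eq_add_sum {a b : ℝ} {v : ℕ → ℝ}
    (hv : ∀ t, v t = a + b * ∑ s ∈ range t, v s * (1 - v s)) (t : ℕ) :
    v (t + 1) = logisticStep b (v t) := by
  rw [logisticStep, hv (t + 1), sum_range_succ, mul_add, ← add_assoc, ← hv t]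

/-- Discrete logistic-type comparison inequality, lower bound, for the sequence
`v t = a₁ + b₁ * ∑_{s<t} v s (1 - v s)` (so `v 0 = a₁`), assuming `v t ≤ 1/2` up to time `T`. -/
theorem discrete_logistic_lower (a₁ b₁ : ℝ) (ha0 : 0 < a₁) (ha1 : a₁ < 1) (hb : 0 < b₁)
    (v : ℕ → ℝ)
    (hv : ∀ t : ℕ, v t = a₁ + b₁ * ∑ s ∈ Finset.range t, v s * (1 - v s))
    (T : ℕ) (hT : ∀ t ≤ T, v t ≤ 1 / 2) :
    ∀ t ≤ T,
      (a₁ / (1 - a₁)) * Real.exp ((b₁ / (1 + b₁)) * t) /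
        (1 + (a₁ / (1 - a₁)) * Real.exp ((b₁ / (1 + b₁)) * t)) ≤ v t := by
  set w : ℕ → ℝ := fun t => a₁ / (1 - a₁) * Real.exp (b₁ / (1 + b₁) * t)
  have hw : ∀ t, 0 ≤ w t := fun t => by
    have : 0 < 1 - a₁ := by linarith
    positivity
  have hw_succ : ∀ t, w (t + 1) = w t * Real.exp (b₁ / (1 + b₁)) := fun t => by
    simp only [w, Nat.cast_succ, mul_add_one, Real.exp_add, mul_assoc]
  refine le_of_monotoneOn_Iic_of_le_step (monotoneOn_logisticStep hb.le) ?_ (fun t => ?_)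
    (logisticStep_of_eq_add_sum hv) hT
  · have : 1 - a₁ ≠ 0 := by linarith
    rw [hv 0, sum_range_zero, mul_zero, add_zero]
    simp only [Nat.cast_zero, mul_zero, Real.exp_zero, mul_one]
    field_simp
    linarith
  · show w (t + 1) / (1 + w (t + 1)) ≤ logisticStep b₁ (w t / (1 + w t))
    rw [hw_succ]
    exact div_one_add_mul_le_logisticStep hb.le (hw t) (Real.exp_pos _).le
      (Real.exp_div_one_add_le hb.le)
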